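/- arXiv:1410.8807 — 2 statements merged into one kernel-verified Lean document; each statement's English description precedes it below -/
import Mathlib

section
/- Let G' be obtained from G by an edge splitting: e = xy is an edge contained in exactly one triangle xyz, while xz and zy each belong to more than one triangle; replace e by the path x–w–y through a new vertex w and add the edge wz. Then T(G') is a cycle if and only if T(G) is a cycle, and moreover T(G) ≅ C_n if and only if T(G') ≅ C_{n+1}. -/
open SimpleGraph

/-- A triangle in a graph: a 3-element vertex set, pairwise adjacent. -/
def IsTriangle {V : Type*} (G : SimpleGraph V) (t : Finset V) : Prop :=
  t.card = 3 ∧ ∀ u ∈ t, ∀ v ∈ t, u ≠ v → G.Adj u v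

/-- The triangle graph: vertices are the triangles of `G`, two triangles are
adjacent iff they share an edge (equivalently, share exactly two vertices). -/
def triangleGraph {V : Type*} [DecidableEq V] (G : SimpleGraph V) :
    SimpleGraph {t : Finset V // IsTriangle G t} where
  Adj s t := s ≠ t ∧ ((s : Finset V) ∩ (t : Finset V)).card = 2
  symm := by
    constructor
    intro s t h
    exact ⟨h.1.symm, by rw [Finset.inter_comm]; exact h.2⟩
  loopless := ⟨fun s h => h.1 rfl⟩

/-- `K₅` minus the edges of a triangle (on vertices 0,1,2). -/
def K5mK3 : SimpleGraph (Fin 5) where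
  Adj u v := u ≠ v ∧ ¬(u.val < 3 ∧ v.val < 3)
  symm := by
    constructor
    intro u v h
    exact ⟨h.1.symm, fun hc => h.2 ⟨hc.2, hc.1⟩⟩
  loopless := ⟨fun u h => h.1 rfl⟩

/-- The wheel `Wₙ = K₁ ∨ Cₙ`; the hub is `none`. -/
def wheel (n : ℕ) : SimpleGraph (Option (Fin n)) :=
  SimpleGraph.fromRel (fun u v =>
    u = none ∨ ∃ a b, u = some a ∧ v = some b ∧ (cycleGraph n).Adj a b)

/-- The square of a graph: join vertices at distance at most 2. -/
def squareGraph {V : Type*} (G : SimpleGraph V) : SimpleGraph V where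
  Adj u v := u ≠ v ∧ (G.Adj u v ∨ ∃ w, G.Adj u w ∧ G.Adj w v)
  symm := by
    constructor
    intro u v h
    refine ⟨h.1.symm, ?_⟩
    rcases h.2 with h' | ⟨w, h1, h2⟩
    · exact Or.inl h'.symm
    · exact Or.inr ⟨w, h2.symm, h1.symm⟩
  loopless := ⟨fun u h => h.1 rfl⟩

/-- The number of triangles of `G` containing both `u` and `v`. -/
noncomputable def triCount {V : Type*} (G : SimpleGraph V) (u v : V) : ℕ :=
  {t : Finset V | IsTriangle G t ∧ u ∈ t ∧ v ∈ t}.ncard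

/-- `G` contains a (not necessarily induced) subgraph isomorphic to `H`. -/
def HasSubgraphIso {α V : Type*} (H : SimpleGraph α) (G : SimpleGraph V) : Prop :=
  ∃ f : H →g G, Function.Injective f

/-- The graph obtained from `G` by splitting the edge `xy` (belonging to the unique
triangle `xyz`): replace `xy` by the path `x–w–y` through a new vertex `w = none`
and add the edge `wz`. -/
def splitGraph {V : Type*} (G : SimpleGraph V) (x y z : V) : SimpleGraph (Option V) :=
  SimpleGraph.fromRel (fun u v =>
    (∃ a b, u = some a ∧ v = some b ∧ G.Adj a b ∧ ¬(a = x ∧ b = y) ∧ ¬(a = y ∧ b = x)) ∨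
    (u = none ∧ (v = some x ∨ v = some y ∨ v = some z)))

/-!
Write `t₀ = xyz` and `w` for the new vertex. Every triangle of `G` other than `t₀` misses `x` or
`y`, so it survives in `G'`, while `t₀` is replaced by `wxz` and `wyz`, which are adjacent in
`T(G')`. A neighbour of `t₀` in `T(G)` shares with it either `xz` or `yz` (never `xy`), and it
becomes a neighbour of `wxz`, respectively of `wyz`. Hence `T(G')` arises from `T(G)` by splitting
the vertex `t₀` into an edge, both new vertices receiving at least one old neighbour by the
hypotheses on `xz` and `zy`. In a cycle such a split turns `Cₙ` into `Cₙ₊₁`, and conversely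
contracting an edge of `Cₙ₊₁` gives `Cₙ`; the split graph is never `C₃` because the two new
vertices have no common neighbour.
-/

namespace SimpleGraph

variable {α β : Type*}

/-- `H` with the vertex `t₀` split into the edge `none — some t₀`: the new vertex `none` takes over
the neighbours of `t₀` that lie in `S`, and `some t₀` keeps the others. -/
def splitVertex (H : SimpleGraph α) (t₀ : α) (S : Set α) : SimpleGraph (Option α) where
  Adj
    | some s, some t => H.Adj s t ∧ (s = t₀ → t ∉ S) ∧ (t = t₀ → s ∉ S)
    | none, some t => t = t₀ ∨ (t ∈ S ∧ H.Adj t₀ t)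
    | some s, none => s = t₀ ∨ (s ∈ S ∧ H.Adj t₀ s)
    | none, none => False
  symm := ⟨by
    rintro (_ | s) (_ | t) h
    · exact h
    · exact h
    · exact h
    · exact ⟨h.1.symm, h.2.2, h.2.1⟩⟩
  loopless := ⟨by
    rintro (_ | s) h
    · exact h
    · exact H.irrefl h.1⟩

variable {H : SimpleGraph α} {K : SimpleGraph β} {t₀ : α} {k₀ : β} {S : Set α} {T : Set β}

namespace splitVertex

@[simp] lemma adj_some_some {s t : α} :
    (splitVertex H t₀ S).Adj (some s) (some t) ↔ H.Adj s t ∧ (s = t₀ → t ∉ S) ∧ (t = t₀ → s ∉ S) :=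
  Iff.rfl

@[simp] lemma adj_none_some {t : α} :
    (splitVertex H t₀ S).Adj none (some t) ↔ t = t₀ ∨ (t ∈ S ∧ H.Adj t₀ t) :=
  Iff.rfl

@[simp] lemma adj_some_none {s : α} :
    (splitVertex H t₀ S).Adj (some s) none ↔ s = t₀ ∨ (s ∈ S ∧ H.Adj t₀ s) :=
  Iff.rfl

@[simp] lemma not_adj_none_none : ¬ (splitVertex H t₀ S).Adj none none := id

lemma not_adj_none_of_adj_some {w : Option α} (h : (splitVertex H t₀ S).Adj (some t₀) w) :
    ¬ (splitVertex H t₀ S).Adj none w := by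
  rcases w with _ | t
  · exact id
  · rintro (rfl | ⟨hS, -⟩)
    exacts [H.irrefl h.1, h.2.1 rfl hS]

/-- The vertex `t₀` is recovered by contracting the edge between `none` and `some t₀`. -/
lemma adj_iff {s t : α} : H.Adj s t ↔ s ≠ t ∧
    ((splitVertex H t₀ S).Adj (some s) (some t) ∨
      (s = t₀ ∧ (splitVertex H t₀ S).Adj none (some t)) ∨
      (t = t₀ ∧ (splitVertex H t₀ S).Adj none (some s))) := by
  simp only [adj_some_some, adj_none_some]
  constructor
  · intro h
    refine ⟨h.ne, ?_⟩
    by_cases hs : s = t₀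
    · subst hs
      by_cases htS : t ∈ S
      · exact Or.inr (Or.inl ⟨rfl, Or.inr ⟨htS, h⟩⟩)
      · exact Or.inl ⟨h, fun _ => htS, fun ht => absurd ht.symm h.ne⟩
    by_cases ht : t = t₀
    · subst ht
      by_cases hsS : s ∈ S
      · exact Or.inr (Or.inr ⟨rfl, Or.inr ⟨hsS, h.symm⟩⟩)
      · exact Or.inl ⟨h, fun hs' => absurd hs' hs, fun _ => hsS⟩
    · exact Or.inl ⟨h, fun hs' => absurd hs' hs, fun ht' => absurd ht' ht⟩
  · rintro ⟨hne, h | ⟨rfl, rfl | h⟩ | ⟨rfl, rfl | h⟩⟩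
    exacts [h.1, absurd rfl hne, h.2, absurd rfl hne, h.2.symm]

end splitVertex

def Iso.splitVertexCongr (φ : H ≃g K) (h₀ : φ t₀ = k₀) (hS : ∀ t, H.Adj t₀ t → (φ t ∈ T ↔ t ∈ S)) :
    splitVertex H t₀ S ≃g splitVertex K k₀ T where
  toEquiv := φ.toEquiv.optionCongr
  map_rel_iff' := by
    subst h₀
    rintro (_ | s) (_ | t)
    · simp
    · simpa [Iso.map_adj_iff] using or_congr_right (and_congr_left fun h => hS t h)
    · simpa [Iso.map_adj_iff] using or_congr_right (and_congr_left fun h => hS s h)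
    · simp only [Equiv.optionCongr_apply, Option.map_some, splitVertex.adj_some_some,
        RelIso.coe_fn_toEquiv, Iso.map_adj_iff, φ.injective.eq_iff]
      exact and_congr_right fun h => and_congr (imp_congr_right fun hs => not_congr (hS t (hs ▸ h)))
        (imp_congr_right fun ht => not_congr (hS s (ht ▸ h.symm)))

def Iso.ofSplitVertex (Θ : splitVertex H t₀ S ≃g splitVertex K k₀ T) (hnone : Θ none = none)
    (h₀ : Θ (some t₀) = some k₀) : H ≃g K where
  toEquiv := Θ.toEquiv.removeNone
  map_rel_iff' := by
    intro s t
    have hsome : ∀ s, some (Θ.toEquiv.removeNone s) = Θ (some s) := fun s =>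
      Equiv.removeNone_some _ (Option.ne_none_iff_exists'.mp fun h =>
        Option.some_ne_none s (Θ.injective (h.trans hnone.symm)))
    have hk₀ : ∀ s, Θ.toEquiv.removeNone s = k₀ ↔ s = t₀ := fun s => by
      rw [← Option.some_inj, hsome, ← h₀, Θ.injective.eq_iff, Option.some_inj]
    simp only [splitVertex.adj_iff (t₀ := k₀) (S := T), hk₀, hsome, ← hnone,
      Iso.map_adj_iff, (Equiv.injective _).ne_iff, splitVertex.adj_iff (t₀ := t₀) (S := S)]

lemma cycleGraph_adj_iff_val {n : ℕ} (hn : 2 ≤ n) {u v : Fin n} :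
    (cycleGraph n).Adj u v ↔ (u : ℕ) + 1 = v ∨ (v : ℕ) + 1 = u ∨
      ((u : ℕ) = 0 ∧ (v : ℕ) + 1 = n) ∨ ((v : ℕ) = 0 ∧ (u : ℕ) + 1 = n) := by
  rw [cycleGraph_adj']
  have := u.isLt; have := v.isLt
  rcases le_or_gt v u with h | h <;> rcases le_or_gt u v with h' | h' <;>
    simp only [Fin.coe_sub_iff_le.mpr, Fin.coe_sub_iff_lt.mpr, h, h'] <;> omega

lemma exists_cycleGraph_iso_eq_zero_eq_neg_one {n : ℕ} {u v : Fin (n + 2)}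
    (h : (cycleGraph (n + 2)).Adj u v) :
    ∃ ρ : cycleGraph (n + 2) ≃g cycleGraph (n + 2), ρ u = 0 ∧ ρ v = -1 := by
  rcases h with h | h
  · refine ⟨⟨Equiv.subRight u, ?_⟩, sub_self u, ?_⟩
    · intro a b
      simp [cycleGraph_adj]
    · change v - u = -1
      rw [← neg_sub, h]
  · refine ⟨⟨Equiv.subLeft u, ?_⟩, sub_self u, ?_⟩
    · intro a b
      simp [cycleGraph_adj, or_comm]
    · change u - v = -1
      rw [← neg_sub, h]

def splitVertexCycleGraphIso (n : ℕ) :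
    splitVertex (cycleGraph (n + 3)) 0 {-1} ≃g cycleGraph (n + 4) where
  toEquiv := finSuccEquivLast.symm
  map_rel_iff' := by
    have : ((-1 : Fin (n + 3)) : ℕ) = n + 2 := Fin.coe_neg_one
    rintro (_ | ⟨i, hi⟩) (_ | ⟨j, hj⟩) <;>
      simp only [finSuccEquivLast_symm_none, finSuccEquivLast_symm_some,
        splitVertex.adj_some_some, splitVertex.adj_none_some, splitVertex.adj_some_none,
        splitVertex.not_adj_none_none, cycleGraph_adj_iff_val (by omega : 2 ≤ n + 3),
        cycleGraph_adj_iff_val (by omega : 2 ≤ n + 4), Fin.ext_iff, Fin.val_last,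
        Fin.val_castSucc, Fin.val_zero, this, Set.mem_singleton_iff, iff_false, true_and,
        and_true] <;> omega

lemma splitVertex_not_iso_cycleGraph_three : IsEmpty (splitVertex H t₀ S ≃g cycleGraph 3) := by
  refine ⟨fun ψ => ?_⟩
  obtain ⟨c, hc₁, hc₂⟩ : ∃ c : Fin 3, ψ none ≠ c ∧ ψ (some t₀) ≠ c := by
    generalize ψ none = a
    generalize ψ (some t₀) = b
    revert a b
    decide
  rw [← ψ.apply_symm_apply c] at hc₁ hc₂
  have hK₃ : ∀ {a b : Fin 3}, a ≠ b → (cycleGraph 3).Adj a b := by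
    rw [cycleGraph_three_eq_top]
    exact id
  exact splitVertex.not_adj_none_of_adj_some (ψ.map_adj_iff.mp (hK₃ hc₂))
    (ψ.map_adj_iff.mp (hK₃ hc₁))

variable {p q : α}

lemma nonempty_splitVertex_iso_cycleGraph_of_iso (hp : p ∈ S) (hp₀ : H.Adj t₀ p)
    (hq : q ∉ S) (hq₀ : H.Adj t₀ q) {n : ℕ} (φ : H ≃g cycleGraph (n + 3)) :
    Nonempty (splitVertex H t₀ S ≃g cycleGraph (n + 4)) := by
  obtain ⟨ρ, hρ₀, hρp⟩ := exists_cycleGraph_iso_eq_zero_eq_neg_one (φ.map_adj_iff.mpr hp₀)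
  set χ : H ≃g cycleGraph (n + 3) := φ.trans ρ
  have hχ₀ : χ t₀ = 0 := hρ₀
  have hχ : ∀ {t}, H.Adj t₀ t → χ t = -1 ∨ χ t = 1 := fun {t} ht => by
    have : χ t ∈ (cycleGraph (n + 3)).neighborSet (χ t₀) := χ.map_adj_iff.mpr ht
    simpa [cycleGraph_neighborSet, hχ₀] using this
  have hS : ∀ t, H.Adj t₀ t → (χ t ∈ ({-1} : Set (Fin (n + 3))) ↔ t ∈ S) := by
    intro t ht
    rw [Set.mem_singleton_iff]
    refine ⟨fun h => χ.injective (h.trans hρp.symm) ▸ hp, fun htS => ?_⟩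
    refine (hχ ht).resolve_right fun h => ?_
    rcases hχ hq₀ with h' | h'
    · exact hq (χ.injective (h'.trans hρp.symm) ▸ hp)
    · exact hq (χ.injective (h'.trans h.symm) ▸ htS)
  exact ⟨(χ.splitVertexCongr hχ₀ hS).trans (splitVertexCycleGraphIso n)⟩

lemma nonempty_iso_cycleGraph_of_splitVertex_iso {n : ℕ}
    (ψ : splitVertex H t₀ S ≃g cycleGraph (n + 4)) : Nonempty (H ≃g cycleGraph (n + 3)) := by
  have hadj : (splitVertex H t₀ S).Adj (some t₀) none := Or.inl rfl
  obtain ⟨ρ, hρ₀, hρ₁⟩ := exists_cycleGraph_iso_eq_zero_eq_neg_one (ψ.map_adj_iff.mpr hadj)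
  set ε := splitVertexCycleGraphIso n
  have hε₀ : ε (some 0) = 0 := Fin.castSucc_zero
  have hε₁ : ε none = -1 := Fin.ext (by simp [ε, splitVertexCycleGraphIso, Fin.coe_neg_one])
  refine ⟨Iso.ofSplitVertex ((ψ.trans ρ).trans ε.symm) ?_ ?_⟩
  · exact ε.symm_apply_eq.mpr (hρ₁.trans hε₁.symm)
  · exact ε.symm_apply_eq.mpr (hρ₀.trans hε₀.symm)

lemma nonempty_splitVertex_iso_cycleGraph_iff (hp : p ∈ S) (hp₀ : H.Adj t₀ p) (hq : q ∉ S)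
    (hq₀ : H.Adj t₀ q) (n : ℕ) :
    Nonempty (splitVertex H t₀ S ≃g cycleGraph (n + 4)) ↔ Nonempty (H ≃g cycleGraph (n + 3)) :=
  ⟨fun ⟨ψ⟩ => nonempty_iso_cycleGraph_of_splitVertex_iso ψ,
    fun ⟨φ⟩ => nonempty_splitVertex_iso_cycleGraph_of_iso hp hp₀ hq hq₀ φ⟩

lemma exists_splitVertex_iso_cycleGraph_iff (hp : p ∈ S) (hp₀ : H.Adj t₀ p) (hq : q ∉ S)
    (hq₀ : H.Adj t₀ q) :
    (∃ n, 3 ≤ n ∧ Nonempty (splitVertex H t₀ S ≃g cycleGraph n)) ↔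
      ∃ n, 3 ≤ n ∧ Nonempty (H ≃g cycleGraph n) := by
  constructor
  · rintro ⟨n, hn, ψ⟩
    obtain ⟨m, rfl⟩ : ∃ m, n = m + 4 := by
      obtain rfl | hn := hn.eq_or_lt
      · exact (splitVertex_not_iso_cycleGraph_three.false ψ.some).elim
      · exact ⟨n - 4, by omega⟩
    exact ⟨m + 3, by omega, (nonempty_splitVertex_iso_cycleGraph_iff hp hp₀ hq hq₀ m).mp ψ⟩
  · rintro ⟨n, hn, φ⟩
    obtain ⟨m, rfl⟩ : ∃ m, n = m + 3 := ⟨n - 3, by omega⟩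
    exact ⟨m + 4, by omega, (nonempty_splitVertex_iso_cycleGraph_iff hp hp₀ hq hq₀ m).mpr φ⟩

end SimpleGraph

namespace Finset
variable {V : Type*} [DecidableEq V] {x y z : V} {t : Finset V}

lemma card_pair_inter_eq_two_iff (hxy : x ≠ y) : #({x, y} ∩ t) = 2 ↔ x ∈ t ∧ y ∈ t := by
  by_cases hx : x ∈ t <;> by_cases hy : y ∈ t <;>
    simp [insert_inter_of_mem, insert_inter_of_notMem, hx, hy, hxy]

lemma card_triple_inter_eq_two_iff (hxz : x ≠ z) (hyz : y ≠ z)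
    (h : ¬(x ∈ t ∧ y ∈ t)) :
    #({x, y, z} ∩ t) = 2 ↔ (x ∈ t ∧ z ∈ t) ∨ (y ∈ t ∧ z ∈ t) := by
  by_cases hx : x ∈ t <;> by_cases hy : y ∈ t <;> by_cases hz : z ∈ t <;>
    simp_all [insert_inter_of_mem, insert_inter_of_notMem]

lemma card_image_some_inter_image_some (s t : Finset V) :
    #(s.image some ∩ t.image some) = #(s ∩ t) := by
  rw [← image_inter _ _ (Option.some_injective V),
    card_image_of_injective _ (Option.some_injective V)]

lemma card_insert_none_inter_image_some (x y : V) (t : Finset V) :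
    #({none, some x, some y} ∩ t.image some) = #({x, y} ∩ t) := by
  have : ({none, some x, some y} : Finset (Option V)) ∩ t.image some =
      ({x, y} : Finset V).image some ∩ t.image some := by
    ext (_ | c) <;> simp
  rw [this, card_image_some_inter_image_some]

end Finset

section splitGraph
variable {V : Type*} {G : SimpleGraph V} {x y z : V}

@[simp] lemma splitGraph_adj_some_some {a b : V} :
    (splitGraph G x y z).Adj (some a) (some b) ↔
      G.Adj a b ∧ ¬(a = x ∧ b = y) ∧ ¬(a = y ∧ b = x) := by
  simp only [splitGraph, fromRel_adj, ne_eq, Option.some.injEq, reduceCtorEq, false_and, or_false,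
    exists_and_left, exists_eq_left']
  constructor
  · rintro ⟨-, h | h⟩
    · exact h
    · exact ⟨h.1.symm, fun h' => h.2.2 ⟨h'.2, h'.1⟩, fun h' => h.2.1 ⟨h'.2, h'.1⟩⟩
  · intro h
    exact ⟨h.1.ne, Or.inl h⟩

@[simp] lemma splitGraph_adj_none_some {a : V} :
    (splitGraph G x y z).Adj none (some a) ↔ a = x ∨ a = y ∨ a = z := by
  simp [splitGraph]

lemma isTriangle_iff_isNClique {t : Finset V} : IsTriangle G t ↔ G.IsNClique 3 t :=
  ⟨fun h => ⟨h.2, h.1⟩, fun h => ⟨h.2, h.1⟩⟩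

lemma exists_ne_of_two_le_triCount {u v : V} (h : 2 ≤ triCount G u v) (t₀ : Finset V) :
    ∃ t, (IsTriangle G t ∧ u ∈ t ∧ v ∈ t) ∧ t ≠ t₀ :=
  Set.exists_ne_of_one_lt_ncard h t₀

variable [DecidableEq V]

lemma IsTriangle.adj (hT : IsTriangle G {x, y, z}) : G.Adj x y ∧ G.Adj x z ∧ G.Adj y z :=
  is3Clique_triple_iff.mp (isTriangle_iff_isNClique.mp hT)

lemma isTriangle_splitGraph_image_iff (hxy : x ≠ y) {t : Finset V} :
    IsTriangle (splitGraph G x y z) (t.image some) ↔ IsTriangle G t ∧ ¬(x ∈ t ∧ y ∈ t) := by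
  simp only [IsTriangle, Finset.card_image_of_injective _ (Option.some_injective V),
    Finset.forall_mem_image, ne_eq, Option.some.injEq, splitGraph_adj_some_some]
  constructor
  · rintro ⟨h3, h⟩
    exact ⟨⟨h3, fun u hu v hv huv => (h hu hv huv).1⟩,
      fun ⟨hx, hy⟩ => (h hx hy hxy).2.1 ⟨rfl, rfl⟩⟩
  · rintro ⟨⟨h3, h⟩, hnxy⟩
    refine ⟨h3, fun u hu v hv huv => ⟨h u hu v hv huv, ?_, ?_⟩⟩ <;> rintro ⟨rfl, rfl⟩
    exacts [hnxy ⟨hu, hv⟩, hnxy ⟨hv, hu⟩]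

lemma IsTriangle.splitGraph_none (hT : IsTriangle G {x, y, z}) :
    IsTriangle (splitGraph G x y z) {none, some x, some z} ∧
      IsTriangle (splitGraph G x y z) {none, some y, some z} := by
  obtain ⟨hxy, hxz, hyz⟩ := hT.adj
  simp [isTriangle_iff_isNClique, is3Clique_triple_iff, hxz, hyz, hxy.ne, hxy.ne.symm, hxz.ne.symm,
    hyz.ne.symm]

lemma eq_or_eq_of_isTriangle_splitGraph_of_none_mem {s : Finset (Option V)}
    (hs : IsTriangle (splitGraph G x y z) s) (h : none ∈ s) :
    s = {none, some x, some z} ∨ s = {none, some y, some z} := by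
  obtain ⟨u, v, -, huv⟩ := Finset.card_eq_two.mp
    (show (s.erase none).card = 2 by rw [Finset.card_erase_of_mem h, hs.1])
  rw [← Finset.insert_erase h, huv] at hs ⊢
  obtain ⟨hu, hv, huv⟩ := is3Clique_triple_iff.mp (isTriangle_iff_isNClique.mp hs)
  rcases u with _ | a
  · exact absurd hu (SimpleGraph.irrefl _)
  rcases v with _ | b
  · exact absurd hv (SimpleGraph.irrefl _)
  simp only [splitGraph_adj_none_some, splitGraph_adj_some_some] at hu hv huv
  rcases hu with rfl | rfl | rfl <;> rcases hv with rfl | rfl | rfl <;>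
    simp_all [Finset.pair_comm]

lemma exists_image_eq_of_isTriangle_splitGraph_of_none_notMem {s : Finset (Option V)}
    (hs : IsTriangle (splitGraph G x y z) s) (h : none ∉ s) (hxy : x ≠ y) :
    ∃ t, (IsTriangle G t ∧ ¬(x ∈ t ∧ y ∈ t)) ∧ t.image some = s := by
  have hs' : s.eraseNone.image some = s := by
    rw [Finset.image_some_eraseNone, Finset.erase_eq_of_notMem h]
  exact ⟨s.eraseNone, (isTriangle_splitGraph_image_iff hxy).mp (hs' ▸ hs), hs'⟩

lemma eq_of_triCount_eq_one (hT : IsTriangle G {x, y, z}) (h : triCount G x y = 1)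
    {t : Finset V} (ht : IsTriangle G t) (hx : x ∈ t) (hy : y ∈ t) : t = {x, y, z} := by
  obtain ⟨a, ha⟩ := Set.ncard_eq_one.mp h
  have h₁ : t ∈ {t : Finset V | IsTriangle G t ∧ x ∈ t ∧ y ∈ t} := ⟨ht, hx, hy⟩
  have h₂ : {x, y, z} ∈ {t : Finset V | IsTriangle G t ∧ x ∈ t ∧ y ∈ t} := ⟨hT, by simp, by simp⟩
  rw [ha] at h₁ h₂
  exact h₁.trans h₂.symm

end splitGraph

section splitTriangle
variable {V : Type*} [DecidableEq V] {G : SimpleGraph V} {x y z : V}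

lemma triangleGraph_adj {s t : {t : Finset V // IsTriangle G t}} :
    (triangleGraph G).Adj s t ↔ s ≠ t ∧ (s.1 ∩ t.1).card = 2 :=
  Iff.rfl

lemma triangleGraph_adj_iff_of_not_mem (hT : IsTriangle G {x, y, z})
    {t : {t : Finset V // IsTriangle G t}} (ht : ¬(x ∈ t.1 ∧ y ∈ t.1)) :
    (triangleGraph G).Adj ⟨{x, y, z}, hT⟩ t ↔ (x ∈ t.1 ∧ z ∈ t.1) ∨ (y ∈ t.1 ∧ z ∈ t.1) := by
  have hne : (⟨{x, y, z}, hT⟩ : {t : Finset V // IsTriangle G t}) ≠ t := by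
    rintro rfl
    simp at ht
  obtain ⟨-, hxz, hyz⟩ := hT.adj
  exact (and_iff_right hne).trans (Finset.card_triple_inter_eq_two_iff hxz.ne hyz.ne ht)

def splitTriangle (hT : IsTriangle G {x, y, z}) (t : Option {t : Finset V // IsTriangle G t}) :
    {s : Finset (Option V) // IsTriangle (splitGraph G x y z) s} :=
  match t with
  | none => ⟨{none, some x, some z}, hT.splitGraph_none.1⟩
  | some t =>
    if h : x ∈ t.1 ∧ y ∈ t.1 then ⟨{none, some y, some z}, hT.splitGraph_none.2⟩
    else ⟨t.1.image some, (isTriangle_splitGraph_image_iff hT.adj.1.ne).mpr ⟨t.2, h⟩⟩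

variable (hT : IsTriangle G {x, y, z})

lemma splitTriangle_injective
    (huniq : ∀ t, IsTriangle G t → x ∈ t → y ∈ t → t = {x, y, z}) :
    Function.Injective (splitTriangle hT) := by
  obtain ⟨hxy, hxz, -⟩ := hT.adj
  have hAB : ({none, some x, some z} : Finset (Option V)) ≠ {none, some y, some z} := fun h => by
    simpa [hxy.ne, hxz.ne] using congrArg (some x ∈ ·) h
  have hnone : ∀ {a b : V} {t : Finset V},
      ({none, some a, some b} : Finset (Option V)) ≠ t.image some := fun h => by
    simpa using congrArg (none ∈ ·) h
  rintro (_ | s) (_ | t) h <;> simp only [splitTriangle, Subtype.ext_iff] at h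
  · rfl
  · split_ifs at h
    exacts [(hAB h).elim, (hnone h).elim]
  · split_ifs at h
    exacts [(hAB h.symm).elim, (hnone h.symm).elim]
  · split_ifs at h with hs ht ht
    · exact congrArg some (Subtype.ext ((huniq _ s.2 hs.1 hs.2).trans (huniq _ t.2 ht.1 ht.2).symm))
    · exact (hnone h).elim
    · exact (hnone h.symm).elim
    · exact congrArg some (Subtype.ext (Finset.image_injective (Option.some_injective V) h))

lemma splitTriangle_surjective : Function.Surjective (splitTriangle hT) := by
  rintro ⟨s, hs⟩
  by_cases h : none ∈ s
  · rcases eq_or_eq_of_isTriangle_splitGraph_of_none_mem hs h with rfl | rfl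
    · exact ⟨none, rfl⟩
    · exact ⟨some ⟨{x, y, z}, hT⟩, by simp [splitTriangle]⟩
  · obtain ⟨t, ⟨ht, hnxy⟩, rfl⟩ :=
      exists_image_eq_of_isTriangle_splitGraph_of_none_notMem hs h hT.adj.1.ne
    exact ⟨some ⟨t, ht⟩, by simp [splitTriangle, hnxy]⟩

lemma card_splitTriangle_none_inter_eq_two_iff
    (huniq : ∀ t, IsTriangle G t → x ∈ t → y ∈ t → t = {x, y, z})
    (t : {t : Finset V // IsTriangle G t}) :
    ((splitTriangle hT none).1 ∩ (splitTriangle hT (some t)).1).card = 2 ↔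
      (splitVertex (triangleGraph G) ⟨{x, y, z}, hT⟩ {t | x ∈ t.1 ∧ z ∈ t.1}).Adj
        none (some t) := by
  obtain ⟨hxy, hxz, hyz⟩ := hT.adj
  rw [splitVertex.adj_none_some]
  simp only [splitTriangle]
  split_ifs with ht
  · refine iff_of_true ?_ (Or.inl (Subtype.ext (huniq _ t.2 ht.1 ht.2)))
    simp [Finset.insert_inter_of_notMem, hxy.ne, hyz.ne, hxz.ne]
  · have hne : t ≠ ⟨{x, y, z}, hT⟩ := by
      rintro rfl
      simp at ht
    rw [Finset.card_insert_none_inter_image_some, Finset.card_pair_inter_eq_two_iff hxz.ne,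
      triangleGraph_adj_iff_of_not_mem hT ht, Set.mem_ofPred_eq]
    tauto

lemma card_splitTriangle_some_inter_eq_two_iff
    (huniq : ∀ t, IsTriangle G t → x ∈ t → y ∈ t → t = {x, y, z})
    {s t : {t : Finset V // IsTriangle G t}} (hst : s ≠ t) :
    ((splitTriangle hT (some s)).1 ∩ (splitTriangle hT (some t)).1).card = 2 ↔
      (splitVertex (triangleGraph G) ⟨{x, y, z}, hT⟩ {t | x ∈ t.1 ∧ z ∈ t.1}).Adj
        (some s) (some t) := by
  obtain ⟨-, -, hyz⟩ := hT.adj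
  have hne : ∀ {t : {t : Finset V // IsTriangle G t}}, ¬(x ∈ t.1 ∧ y ∈ t.1) →
      t ≠ ⟨{x, y, z}, hT⟩ := by
    rintro t ht rfl
    simp at ht
  have hB : ∀ {s t : {t : Finset V // IsTriangle G t}}, x ∈ s.1 ∧ y ∈ s.1 → ¬(x ∈ t.1 ∧ y ∈ t.1) →
      ((({none, some y, some z} : Finset (Option V)) ∩ t.1.image some).card = 2 ↔
        (splitVertex (triangleGraph G) ⟨{x, y, z}, hT⟩ {t | x ∈ t.1 ∧ z ∈ t.1}).Adj
          (some s) (some t)) := by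
    intro s t hs ht
    obtain rfl : s = ⟨{x, y, z}, hT⟩ := Subtype.ext (huniq _ s.2 hs.1 hs.2)
    rw [Finset.card_insert_none_inter_image_some, Finset.card_pair_inter_eq_two_iff hyz.ne,
      splitVertex.adj_some_some, triangleGraph_adj_iff_of_not_mem hT ht]
    simp only [Set.mem_ofPred_eq, hne ht, forall_const, IsEmpty.forall_iff]
    tauto
  simp only [splitTriangle]
  split_ifs with hs ht ht
  · exact absurd (Subtype.ext ((huniq _ s.2 hs.1 hs.2).trans (huniq _ t.2 ht.1 ht.2).symm)) hst
  · exact hB hs ht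
  · rw [Finset.inter_comm, adj_comm]
    exact hB ht hs
  · rw [Finset.card_image_some_inter_image_some, splitVertex.adj_some_some]
    simp [triangleGraph_adj, hst, hne hs, hne ht]

noncomputable def splitVertexTriangleGraphIso
    (huniq : ∀ t, IsTriangle G t → x ∈ t → y ∈ t → t = {x, y, z}) :
    splitVertex (triangleGraph G) ⟨{x, y, z}, hT⟩ {t | x ∈ t.1 ∧ z ∈ t.1} ≃g
      triangleGraph (splitGraph G x y z) where
  toEquiv := Equiv.ofBijective (splitTriangle hT)
    ⟨splitTriangle_injective hT huniq, splitTriangle_surjective hT⟩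
  map_rel_iff' {u v} := by
    have key : ∀ u v, u ≠ v → (((splitTriangle hT u).1 ∩ (splitTriangle hT v).1).card = 2 ↔
        (splitVertex (triangleGraph G) ⟨{x, y, z}, hT⟩ {t | x ∈ t.1 ∧ z ∈ t.1}).Adj u v) := by
      rintro (_ | s) (_ | t) huv
      · exact absurd rfl huv
      · exact card_splitTriangle_none_inter_eq_two_iff hT huniq t
      · rw [Finset.inter_comm, adj_comm]
        exact card_splitTriangle_none_inter_eq_two_iff hT huniq s
      · exact card_splitTriangle_some_inter_eq_two_iff hT huniq fun h => huv (congrArg some h)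
    change (triangleGraph _).Adj (splitTriangle hT u) (splitTriangle hT v) ↔ _
    rw [triangleGraph_adj, (splitTriangle_injective hT huniq).ne_iff]
    exact ⟨fun ⟨huv, h⟩ => (key u v huv).mp h, fun h => ⟨h.ne, (key u v h.ne).mpr h⟩⟩

lemma exists_triangleGraph_adj_of_two_le_triCount
    (huniq : ∀ t, IsTriangle G t → x ∈ t → y ∈ t → t = {x, y, z})
    (hxz : 2 ≤ triCount G x z) (hzy : 2 ≤ triCount G z y) :
    ∃ P Q : {t : Finset V // IsTriangle G t},
      P ∈ {t | x ∈ t.1 ∧ z ∈ t.1} ∧ (triangleGraph G).Adj ⟨{x, y, z}, hT⟩ P ∧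
      Q ∉ {t | x ∈ t.1 ∧ z ∈ t.1} ∧ (triangleGraph G).Adj ⟨{x, y, z}, hT⟩ Q := by
  obtain ⟨P, ⟨hP, hPx, hPz⟩, hP₀⟩ := exists_ne_of_two_le_triCount hxz {x, y, z}
  obtain ⟨Q, ⟨hQ, hQz, hQy⟩, hQ₀⟩ := exists_ne_of_two_le_triCount hzy {x, y, z}
  have hPy : y ∉ P := fun hy => hP₀ (huniq P hP hPx hy)
  have hQx : x ∉ Q := fun hx => hQ₀ (huniq Q hQ hx hQy)
  exact ⟨⟨P, hP⟩, ⟨Q, hQ⟩, ⟨hPx, hPz⟩,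
    (triangleGraph_adj_iff_of_not_mem hT fun h => hPy h.2).mpr (Or.inl ⟨hPx, hPz⟩),
    fun h => hQx h.1,
    (triangleGraph_adj_iff_of_not_mem hT fun h => hQx h.1).mpr (Or.inr ⟨hQy, hQz⟩)⟩

end splitTriangle

theorem triangleGraph_cycle_iff_of_edgeSplitting_general {V : Type*} [DecidableEq V]
    (G : SimpleGraph V) (x y z : V)
    (hT : IsTriangle G {x, y, z})
    (huniq : triCount G x y = 1)
    (hxz : 2 ≤ triCount G x z) (hzy : 2 ≤ triCount G z y) :
    ((∃ n, 3 ≤ n ∧ Nonempty (triangleGraph G ≃g cycleGraph n)) ↔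
      (∃ n, 3 ≤ n ∧ Nonempty (triangleGraph (splitGraph G x y z) ≃g cycleGraph n))) ∧
    (∀ n, 3 ≤ n →
      (Nonempty (triangleGraph G ≃g cycleGraph n) ↔
        Nonempty (triangleGraph (splitGraph G x y z) ≃g cycleGraph (n + 1)))) := by
  have hxy₀ : ∀ t, IsTriangle G t → x ∈ t → y ∈ t → t = {x, y, z} :=
    fun t ht hx hy => eq_of_triCount_eq_one hT huniq ht hx hy
  obtain ⟨P, Q, hPS, hPadj, hQS, hQadj⟩ :=
    exists_triangleGraph_adj_of_two_le_triCount hT hxy₀ hxz hzy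
  have e := splitVertexTriangleGraphIso hT hxy₀
  have hsplit : ∀ n, Nonempty (triangleGraph (splitGraph G x y z) ≃g cycleGraph n) ↔
      Nonempty (splitVertex (triangleGraph G) ⟨{x, y, z}, hT⟩ {t | x ∈ t.1 ∧ z ∈ t.1} ≃g
        cycleGraph n) :=
    fun n => Nonempty.congr (e.trans ·) (e.symm.trans ·)
  simp only [hsplit]
  refine ⟨(exists_splitVertex_iso_cycleGraph_iff hPS hPadj hQS hQadj).symm, fun n hn => ?_⟩
  obtain ⟨m, rfl⟩ : ∃ m, n = m + 3 := ⟨n - 3, by omega⟩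
  exact (nonempty_splitVertex_iso_cycleGraph_iff hPS hPadj hQS hQadj m).symm

/-- Edge splitting: if `e = xy` lies in exactly one triangle `xyz`, while `xz` and
`zy` each lie in more than one triangle, then the triangle graph of the split graph
is a cycle iff that of `G` is, and `T(G) ≅ Cₙ ↔ T(G') ≅ C_{n+1}`. -/
theorem triangleGraph_cycle_iff_of_edgeSplitting {V : Type*} [Fintype V] [DecidableEq V]
    (G : SimpleGraph V) (x y z : V)
    (hxy : G.Adj x y) (hT : IsTriangle G {x, y, z})
    (huniq : triCount G x y = 1)
    (hxz : 2 ≤ triCount G x z) (hzy : 2 ≤ triCount G z y) :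
    ((∃ n, 3 ≤ n ∧ Nonempty (triangleGraph G ≃g cycleGraph n)) ↔
      (∃ n, 3 ≤ n ∧ Nonempty (triangleGraph (splitGraph G x y z) ≃g cycleGraph n))) ∧
    (∀ n, 3 ≤ n →
      (Nonempty (triangleGraph G ≃g cycleGraph n) ↔
        Nonempty (triangleGraph (splitGraph G x y z) ≃g cycleGraph (n + 1)))) :=
  triangleGraph_cycle_iff_of_edgeSplitting_general G x y z hT huniq hxz hzy
end

section
/- No graph is a minimal forbidden graph for both C_n and C_m when n ≠ m; that is, if G is minimal with the property that T(G) contains an induced n-cycle, then G is not minimal with the property that T(G) contains an induced m-cycle for any m ≠ n. -/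
open SimpleGraph

/-- `G` is a minimal forbidden graph for `Cₙ`: its triangle graph contains an
induced `n`-cycle, but the triangle graph of no proper subgraph of `G` does. -/
def MinimalForbiddenFor {V : Type*} [DecidableEq V] (G : SimpleGraph V) (n : ℕ) : Prop :=
  Nonempty (cycleGraph n ↪g triangleGraph G) ∧
    ∀ H : G.Subgraph, H ≠ ⊤ → IsEmpty (cycleGraph n ↪g triangleGraph H.coe)

/-!
Let `f` embed `Cₙ` into `T(G)` as an induced cycle. Minimality forces every edge of `G` into
one of the triangles `f i`, so the ordered adjacent pairs of `G` form the union `U` of the sets of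
ordered pairs of distinct vertices of these triangles. If `c x` counts the triangles containing
`x ∈ U`, double counting gives `∑ c = 6n` and `∑ c² = ∑ᵢⱼ |offDiag (f i ∩ f j)| = 6n + 2·2n`,
since consecutive triangles share exactly an edge and the others at most a vertex.
As `c² + 2 ≥ 3c`, this yields `|U| ≥ 4n`, with equality when `1 ≤ c ≤ 2`, which holds for
`n ≥ 4` because `Cₙ` is triangle-free; for `n = 3`, `c ≤ 3` gives `|U| ≤ 14 < 16`.
So `|U|`, an invariant of `G`, determines `n`.
-/

open Finset

open Fin.CommRing in
lemma cycleGraph_adj_iff_sub_eq {p : ℕ} {u v : Fin (p + 2)} :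
    (cycleGraph (p + 2)).Adj u v ↔ v - u = 1 ∨ v - u = -1 := by
  rw [cycleGraph_adj, or_comm, ← neg_sub v u, neg_eq_iff_eq_neg]

open Fin.CommRing in
lemma cycleGraph_cliqueFree_three {n : ℕ} (hn : 4 ≤ n) : (cycleGraph n).CliqueFree 3 := by
  obtain ⟨p, rfl⟩ : ∃ p, n = p + 4 := ⟨n - 4, by omega⟩
  have one_ne : (1 : Fin (p + 4)) ≠ 0 := by simp
  have three_ne : (3 : Fin (p + 4)) ≠ 0 := by
    simp [Fin.ext_iff, Nat.mod_eq_of_lt (show 3 < p + 4 by omega)]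
  intro s hs
  obtain ⟨a, b, c, hab, hac, hbc, -⟩ := is3Clique_iff.mp hs
  rw [cycleGraph_adj_iff_sub_eq] at hab hac hbc
  -- `c - a` is a sum of two units `±1`, so `1 = 0` or `3 = 0`
  have hsum : c - a = (c - b) + (b - a) := by ring
  rcases hab with h₁ | h₁ <;> rcases hbc with h₂ | h₂ <;> rcases hac with h₃ | h₃ <;>
    rw [h₁, h₂, h₃] at hsum
  all_goals first
    | exact one_ne (by linear_combination -hsum)
    | exact one_ne (by linear_combination hsum)
    | exact three_ne (by linear_combination -hsum)
    | exact three_ne (by linear_combination hsum)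

lemma cycleGraph_degree_eq_two {n : ℕ} (hn : 3 ≤ n) (v : Fin n) :
    (cycleGraph n).degree v = 2 := by
  obtain ⟨p, rfl⟩ : ∃ p, n = p + 3 := ⟨n - 3, by omega⟩
  exact cycleGraph_degree_three_le

lemma SimpleGraph.CliqueFree.card_lt_of_isClique {α : Type*} {G : SimpleGraph α} {n : ℕ}
    (hG : G.CliqueFree n) {s : Finset α} (hs : G.IsClique (s : Set α)) : #s < n := by
  by_contra! h
  obtain ⟨t, hts, ht⟩ := exists_subset_card_eq h
  exact hG t ⟨hs.subset (by simpa using hts), ht⟩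

lemma sum_biUnion_card_sq_eq_sum_card_inter {ι α : Type*} [Fintype ι] [DecidableEq α]
    (B : ι → Finset α) :
    ∑ x ∈ univ.biUnion B, #{i | x ∈ B i} ^ 2 = ∑ i, ∑ j, #(B i ∩ B j) := by
  simp_rw [card_filter, sq, sum_mul_sum, ite_zero_mul_ite_zero, mul_one]
  rw [sum_comm]
  refine sum_congr rfl fun i _ => ?_
  rw [sum_comm]
  refine sum_congr rfl fun j _ => ?_
  rw [← card_filter, ← filter_mem_eq_inter]
  congr 1
  ext x
  simp only [mem_filter, mem_biUnion, mem_univ, true_and]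
  exact ⟨fun h => h.2, fun h => ⟨⟨i, h.1⟩, h⟩⟩

section TriangleGraph
variable {V α : Type*} [DecidableEq V] {G : SimpleGraph V} {H : SimpleGraph α}

lemma IsTriangle.card_inter_le_two {s t : Finset V} (hs : IsTriangle G s) (ht : IsTriangle G t)
    (hst : s ≠ t) : #(s ∩ t) ≤ 2 := by
  by_contra! h
  have hs' : s ∩ t = s := eq_of_subset_of_card_le inter_subset_left (by rw [hs.1]; omega)
  have ht' : s ∩ t = t := eq_of_subset_of_card_le inter_subset_right (by rw [ht.1]; omega)
  exact hst (hs'.symm.trans ht')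

lemma card_offDiag_inter_of_embedding [DecidableEq α] [DecidableRel H.Adj]
    (f : H ↪g triangleGraph G) (a b : α) :
    #((f a : Finset V) ∩ f b).offDiag = if a = b then 6 else if H.Adj a b then 2 else 0 := by
  rw [offDiag_card]
  split_ifs with hab hadj
  · rw [hab, inter_self, (f b).2.1]
  · rw [(f.map_adj_iff.mpr hadj).2]
  · have hne : f a ≠ f b := f.injective.ne hab
    have hle := (f a).2.card_inter_le_two (f b).2 (Subtype.coe_injective.ne hne)
    have hne2 : #((f a : Finset V) ∩ f b) ≠ 2 := fun h =>
      hadj (f.map_adj_iff.mp ⟨hne, h⟩)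
    interval_cases #((f a : Finset V) ∩ f b) <;> simp_all

lemma adj_of_mem_offDiag (f : H ↪g triangleGraph G) {a b : α} (hab : a ≠ b) {x : V × V}
    (ha : x ∈ (f a : Finset V).offDiag) (hb : x ∈ (f b : Finset V).offDiag) : H.Adj a b := by
  classical
  by_contra hadj
  have h := card_offDiag_inter_of_embedding f a b
  rw [if_neg hab, if_neg hadj, card_eq_zero, offDiag_inter] at h
  exact (eq_empty_iff_forall_notMem.mp h) x (mem_inter.mpr ⟨ha, hb⟩)

lemma sum_card_offDiag_inter_of_embedding [Fintype α] [DecidableEq α] [DecidableRel H.Adj]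
    (f : H ↪g triangleGraph G) (a : α) :
    ∑ b, #((f a : Finset V) ∩ f b).offDiag = 6 + 2 * H.degree a := by
  have hsplit : ∀ b, #((f a : Finset V) ∩ f b).offDiag =
      (if a = b then 6 else 0) + if H.Adj a b then 2 else 0 := by
    intro b
    rw [card_offDiag_inter_of_embedding f a b]
    split_ifs with hab hadj <;> simp_all
  rw [sum_congr rfl fun b _ => hsplit b, sum_add_distrib, sum_ite_eq, if_pos (mem_univ a),
    ← sum_filter, sum_const, smul_eq_mul, mul_comm, ← card_neighborFinset_eq_degree,
    neighborFinset_eq_filter]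

end TriangleGraph

section Minimality
variable {V W α : Type*} [DecidableEq V] [DecidableEq W] {G : SimpleGraph V}
  {G' : SimpleGraph W} {H : SimpleGraph α}

lemma nonempty_embedding_triangleGraph_of_map (f : H ↪g triangleGraph G) (ι : V ↪ W)
    (hι : ∀ a, IsTriangle G' ((f a : Finset V).map ι)) : Nonempty (H ↪g triangleGraph G') := by
  let g : α → {t : Finset W // IsTriangle G' t} := fun a => ⟨(f a : Finset V).map ι, hι a⟩
  have hg : ∀ a b, g a = g b ↔ f a = f b := fun a b => by
    rw [Subtype.ext_iff, Subtype.ext_iff, map_inj]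
  refine ⟨⟨⟨g, fun a b h => f.injective ((hg a b).mp h)⟩, fun {a b} => ?_⟩⟩
  change (g a ≠ g b ∧ #((g a : Finset W) ∩ g b) = 2) ↔ H.Adj a b
  rw [← f.map_adj_iff]
  change _ ↔ f a ≠ f b ∧ #((f a : Finset V) ∩ f b) = 2
  rw [← map_inter, card_map, Ne, Ne, hg]

lemma exists_mem_of_adj_of_minimal (f : H ↪g triangleGraph G)
    (hmin : ∀ K : G.Subgraph, K ≠ ⊤ → IsEmpty (H ↪g triangleGraph K.coe)) {u v : V}
    (huv : G.Adj u v) : ∃ a, u ∈ (f a : Finset V) ∧ v ∈ (f a : Finset V) := by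
  by_contra hno
  let G₀ := SimpleGraph.fromRel fun x y => ∃ a, x ∈ (f a : Finset V) ∧ y ∈ (f a : Finset V)
  have hle : G₀ ≤ G := by
    rintro x y ⟨hxy, ⟨a, hx, hy⟩ | ⟨a, hy, hx⟩⟩
    · exact (f a).2.2 x hx y hy hxy
    · exact (f a).2.2 x hx y hy hxy
  have hne : SimpleGraph.toSubgraph G₀ hle ≠ ⊤ := by
    intro htop
    have h₀ : G₀.Adj u v := by
      change (SimpleGraph.toSubgraph G₀ hle).Adj u v
      rw [htop]
      exact huv
    obtain ⟨-, h | ⟨a, hv, hu⟩⟩ := h₀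
    · exact hno h
    · exact hno ⟨a, hu, hv⟩
  let ι : V ↪ (SimpleGraph.toSubgraph G₀ hle).verts :=
    ⟨fun x => ⟨x, Set.mem_univ x⟩, fun _ _ h => congrArg Subtype.val h⟩
  obtain ⟨g⟩ := nonempty_embedding_triangleGraph_of_map
    (G' := (SimpleGraph.toSubgraph G₀ hle).coe) f ι fun a => by
      refine ⟨by rw [card_map, (f a).2.1], ?_⟩
      simp only [mem_map]
      rintro _ ⟨x, hx, rfl⟩ _ ⟨y, hy, rfl⟩ hxy
      exact ⟨ι.injective.ne_iff.mp hxy, Or.inl ⟨a, hx, hy⟩⟩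
  exact (hmin _ hne).false g

end Minimality

section CoveredPairs
variable {V α : Type*} [DecidableEq V] [Fintype α] {G : SimpleGraph V} {H : SimpleGraph α}

def coveredPairs (f : H ↪g triangleGraph G) : Finset (V × V) :=
  univ.biUnion fun a => (f a : Finset V).offDiag

def coverCount (f : H ↪g triangleGraph G) (x : V × V) : ℕ :=
  #{a | x ∈ (f a : Finset V).offDiag}

lemma mem_coveredPairs {f : H ↪g triangleGraph G} {x : V × V} :
    x ∈ coveredPairs f ↔ ∃ a, x ∈ (f a : Finset V).offDiag := by
  simp [coveredPairs]

lemma adj_iff_mem_coveredPairs_of_minimal (f : H ↪g triangleGraph G)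
    (hmin : ∀ K : G.Subgraph, K ≠ ⊤ → IsEmpty (H ↪g triangleGraph K.coe)) {x : V × V} :
    G.Adj x.1 x.2 ↔ x ∈ coveredPairs f := by
  simp only [mem_coveredPairs, mem_offDiag]
  constructor
  · intro h
    obtain ⟨a, h₁, h₂⟩ := exists_mem_of_adj_of_minimal f hmin h
    exact ⟨a, h₁, h₂, h.ne⟩
  · rintro ⟨a, h₁, h₂, hne⟩
    exact (f a).2.2 _ h₁ _ h₂ hne

lemma sum_coverCount (f : H ↪g triangleGraph G) :
    ∑ x ∈ coveredPairs f, coverCount f x = 6 * Fintype.card α := by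
  classical
  calc ∑ x ∈ coveredPairs f, coverCount f x
      = ∑ x ∈ coveredPairs f, #{a | a ∈ univ ∧ x ∈ (f a : Finset V).offDiag} := by
        simp [coverCount]
    _ = ∑ a, #(f a : Finset V).offDiag := (sum_card_eq_sum_biUnion_card _ _).symm
    _ = 6 * Fintype.card α := by simp [offDiag_card, (f _).2.1, mul_comm]

lemma sum_coverCount_sq [DecidableEq α] [DecidableRel H.Adj] (f : H ↪g triangleGraph G) :
    ∑ x ∈ coveredPairs f, coverCount f x ^ 2 = ∑ a, (6 + 2 * H.degree a) := by
  simp_rw [coveredPairs, coverCount, sum_biUnion_card_sq_eq_sum_card_inter, ← offDiag_inter,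
    sum_card_offDiag_inter_of_embedding]

lemma one_le_coverCount {f : H ↪g triangleGraph G} {x : V × V} (hx : x ∈ coveredPairs f) :
    1 ≤ coverCount f x := by
  obtain ⟨a, ha⟩ := mem_coveredPairs.mp hx
  exact card_pos.mpr ⟨a, mem_filter.mpr ⟨mem_univ a, ha⟩⟩

lemma coverCount_lt_of_cliqueFree {k : ℕ} (hH : H.CliqueFree k) (f : H ↪g triangleGraph G)
    (x : V × V) : coverCount f x < k := by
  refine hH.card_lt_of_isClique fun a ha b hb hab => ?_
  simp only [coe_filter, mem_univ, true_and] at ha hb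
  exact adj_of_mem_offDiag f hab ha hb

end CoveredPairs

section Cycle
variable {V : Type*} [DecidableEq V] {G : SimpleGraph V} {n : ℕ}

lemma sum_coverCount_sq_cycleGraph (hn : 3 ≤ n) (f : cycleGraph n ↪g triangleGraph G) :
    ∑ x ∈ coveredPairs f, coverCount f x ^ 2 = 10 * n := by
  simp [sum_coverCount_sq, cycleGraph_degree_eq_two hn, mul_comm]

lemma four_mul_le_card_coveredPairs (hn : 3 ≤ n) (f : cycleGraph n ↪g triangleGraph G) :
    4 * n ≤ #(coveredPairs f) := by
  have key : ∑ x ∈ coveredPairs f, 3 * coverCount f x ≤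
      ∑ x ∈ coveredPairs f, (coverCount f x ^ 2 + 2) :=
    sum_le_sum fun x _ => by
      rcases le_or_gt (coverCount f x) 1 with h | h <;> nlinarith
  rw [← mul_sum, sum_add_distrib, sum_coverCount, sum_coverCount_sq_cycleGraph hn, sum_const,
    smul_eq_mul, Fintype.card_fin] at key
  omega

lemma card_coveredPairs_le_four_mul (hn : 4 ≤ n) (f : cycleGraph n ↪g triangleGraph G) :
    #(coveredPairs f) ≤ 4 * n := by
  have key : ∑ x ∈ coveredPairs f, (coverCount f x ^ 2 + 2) ≤
      ∑ x ∈ coveredPairs f, 3 * coverCount f x :=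
    sum_le_sum fun x hx => by
      have h₁ := one_le_coverCount hx
      have h₂ := coverCount_lt_of_cliqueFree (cycleGraph_cliqueFree_three hn) f x
      interval_cases coverCount f x <;> norm_num
  rw [← mul_sum, sum_add_distrib, sum_coverCount, sum_coverCount_sq_cycleGraph (by omega),
    sum_const, smul_eq_mul, Fintype.card_fin] at key
  omega

lemma card_coveredPairs_cycleGraph_three_le (f : cycleGraph 3 ↪g triangleGraph G) :
    #(coveredPairs f) ≤ 14 := by
  have key : ∑ x ∈ coveredPairs f, (coverCount f x ^ 2 + 3) ≤
      ∑ x ∈ coveredPairs f, 4 * coverCount f x :=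
    sum_le_sum fun x hx => by
      have h₁ := one_le_coverCount hx
      have h₂ := coverCount_lt_of_cliqueFree (cliqueFree_of_card_lt (n := 4) (by simp)) f x
      interval_cases coverCount f x <;> norm_num
  rw [← mul_sum, sum_add_distrib, sum_coverCount, sum_coverCount_sq_cycleGraph le_rfl,
    sum_const, smul_eq_mul, Fintype.card_fin] at key
  omega

lemma card_coveredPairs_lt (hn : 3 ≤ n) (f : cycleGraph n ↪g triangleGraph G) :
    #(coveredPairs f) < 4 * (n + 1) := by
  rcases hn.eq_or_lt with rfl | hn
  · have := card_coveredPairs_cycleGraph_three_le f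
    omega
  · have := card_coveredPairs_le_four_mul hn f
    omega

end Cycle

theorem not_minimal_forbidden_two_lengths_general {V : Type*} [DecidableEq V]
    (G : SimpleGraph V) (n m : ℕ) (hn : 3 ≤ n) (hm : 3 ≤ m) (hnm : n ≠ m) :
    ¬(MinimalForbiddenFor G n ∧ MinimalForbiddenFor G m) := by
  wlog hlt : n < m generalizing n m
  · exact fun h => this m n hm hn hnm.symm (by omega) h.symm
  rintro ⟨⟨⟨fn⟩, hminn⟩, ⟨⟨fm⟩, hminm⟩⟩
  have hsame : coveredPairs fn = coveredPairs fm := by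
    ext x
    rw [← adj_iff_mem_coveredPairs_of_minimal fn hminn,
      adj_iff_mem_coveredPairs_of_minimal fm hminm]
  have hlower := four_mul_le_card_coveredPairs hm fm
  have hupper := card_coveredPairs_lt hn fn
  rw [hsame] at hupper
  omega

/-- No graph is a minimal forbidden graph for both `Cₙ` and `Cₘ` when `n ≠ m`. -/
theorem not_minimal_forbidden_two_lengths {V : Type*} [Fintype V] [DecidableEq V]
    (G : SimpleGraph V) (n m : ℕ) (hn : 3 ≤ n) (hm : 3 ≤ m) (hnm : n ≠ m) :
    ¬(MinimalForbiddenFor G n ∧ MinimalForbiddenFor G m) :=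
  not_minimal_forbidden_two_lengths_general G n m hn hm hnm
end
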